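/- Let X be a finite set with |X| ≥ 1. Suppose r : {(D∖x, D) : x ∈ D ⊆ X} → ℝ satisfies (i) Σ_{x∈X} r(X∖x, X) = 1, (ii) for every nonempty D ⊊ X, Σ_{x∈D} r(D∖x, D) = Σ_{y∉D} r(D, D∪y), and (iii) for every x ∈ D ⊆ X with D nonempty, Σ_{E ⊇ D} r(E∖x, E) ≥ 0. Define ρ̂(D, x) = Σ_{E ⊇ D} r(E∖x, E). Then ρ̂ is a complete dataset: ρ̂(D,x) ≥ 0 for all x ∈ D, Σ_{x∈D} ρ̂(D,x) = 1 for every nonempty D ⊆ X, and K(ρ̂, D, x) = r(D∖x, D) for all x ∈ D ⊆ X. -/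

import Mathlib

/-!
The Block–Marschak polynomials of the up-sum `ρ̂` are its Möbius inversion on the Boolean
lattice, because `∑_{D ⊆ E ⊆ F} (-1)^{|E ∖ D|}` vanishes unless `D = F`.

For normalisation, read `r E x` as a flow on the arcs `E ∖ {x} → E`. Then `∑_{x ∈ D} ρ̂(D, x)`
is the flow entering the up-set of `D` minus the flow along arcs inside it, which is
`∑_{E ⊇ D} (inflow E - outflow E)`. By conservation only `E = X` contributes, with the unit
inflow of the source condition.
-/

open Finset

variable {α : Type*} [Fintype α] [DecidableEq α]

/-- The Block–Marschak polynomial `K(ρ, D, x) = ∑_{E ⊇ D} (-1)^{|E \ D|} ρ(E, x)`. -/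
noncomputable def bmK (ρ : Finset α → α → ℝ) (D : Finset α) (x : α) : ℝ :=
  ∑ E : Finset α, if D ⊆ E then (-1 : ℝ) ^ (E \ D).card * ρ E x else 0

theorem sum_Icc_neg_one_pow_card_sdiff {ι R : Type*} [DecidableEq ι] [CommRing R]
    (D F : Finset ι) : ∑ E ∈ Icc D F, (-1 : R) ^ #(E \ D) = if D = F then 1 else 0 := by
  by_cases hDF : D ⊆ F
  · have hpow : ∑ S ∈ (F \ D).powerset, (-1 : R) ^ #S = if F \ D = ∅ then 1 else 0 := by
      exact_mod_cast congrArg (Int.cast : ℤ → R) sum_powerset_neg_one_pow_card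
    have hcancel : ∀ S ∈ (F \ D).powerset, (D ∪ S) \ D = S := fun S hS =>
      union_sdiff_cancel_left (disjoint_of_subset_right (mem_powerset.1 hS) disjoint_sdiff)
    rw [Icc_eq_image_powerset hDF, sum_image fun S hS T hT h => ?_,
      sum_congr rfl fun S hS => by rw [hcancel S hS], hpow]
    · simp only [sdiff_eq_empty_iff_subset, Subset.antisymm_iff (s₁ := D), hDF, true_and]
    · rw [← hcancel S hS, ← hcancel T hT, h]
  · rw [Icc_eq_empty fun h => hDF h, sum_empty, if_neg fun h => hDF h.subset]

theorem sum_superset_neg_one_pow_mul_sum_superset {R : Type*} [CommRing R]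
    (f : Finset α → R) (D : Finset α) :
    ∑ E with D ⊆ E, (-1 : R) ^ #(E \ D) * ∑ F with E ⊆ F, f F = f D := by
  simp_rw [mul_sum]
  rw [sum_comm' (t' := {F | D ⊆ F}) (s' := fun F => Icc D F) fun E F => by
    simp only [mem_filter, mem_univ, true_and, mem_Icc]
    exact ⟨fun h => ⟨h, h.1.trans h.2⟩, fun h => h.1⟩]
  simp_rw [← sum_mul, sum_Icc_neg_one_pow_card_sdiff, ite_mul, one_mul, zero_mul]
  simp

section Flow
variable {M : Type*}

-- `r E x` is the flow on the arc `(E ∖ {x}, E)` of the Hasse diagram of the subset lattice.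
def inflow [AddCommMonoid M] (r : Finset α → α → M) (E : Finset α) : M :=
  ∑ x ∈ E, r E x

def outflow [AddCommMonoid M] (r : Finset α → α → M) (E : Finset α) : M :=
  ∑ y ∈ Eᶜ, r (insert y E) y

theorem sum_superset_outflow_eq_sum_superset_sum_sdiff [AddCommMonoid M]
    (r : Finset α → α → M) (D : Finset α) :
    ∑ E with D ⊆ E, outflow r E = ∑ E with D ⊆ E, ∑ x ∈ E \ D, r E x := by
  simp only [outflow]
  rw [sum_sigma', sum_sigma']
  refine sum_nbij' (fun p => ⟨insert p.2 p.1, p.2⟩) (fun p => ⟨p.1.erase p.2, p.2⟩)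
    ?_ ?_ ?_ ?_ fun _ _ => rfl
  all_goals simp only [mem_sigma, mem_filter, mem_univ, true_and, mem_compl, mem_sdiff]
  · rintro ⟨E, y⟩ ⟨hDE, hyE⟩
    exact ⟨hDE.trans (subset_insert y E), mem_insert_self y E, fun hyD => hyE (hDE hyD)⟩
  · rintro ⟨F, x⟩ ⟨hDF, hxF, hxD⟩
    exact ⟨fun z hz => mem_erase.2 ⟨ne_of_mem_of_not_mem hz hxD, hDF hz⟩, notMem_erase x F⟩
  · rintro ⟨E, y⟩ ⟨-, hyE⟩
    simp [erase_insert hyE]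
  · rintro ⟨F, x⟩ ⟨-, hxF, -⟩
    simp [insert_erase hxF]

theorem sum_sum_superset_eq_sum_superset_inflow_sub_outflow [AddCommGroup M]
    (r : Finset α → α → M) (D : Finset α) :
    ∑ x ∈ D, ∑ E with D ⊆ E, r E x = ∑ E with D ⊆ E, (inflow r E - outflow r E) := by
  rw [sum_sub_distrib, sum_superset_outflow_eq_sum_superset_sum_sdiff, ← sum_sub_distrib,
    sum_comm]
  refine sum_congr rfl fun E hE => ?_
  rw [inflow, ← sum_sdiff (mem_filter.1 hE).2, add_sub_cancel_left]

end Flow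

theorem stmt_4_general (r : Finset α → α → ℝ)
    (h1 : ∑ x : α, r Finset.univ x = 1)
    (h2 : ∀ D : Finset α, D.Nonempty → D ≠ Finset.univ →
      ∑ x ∈ D, r D x = ∑ y ∈ Dᶜ, r (insert y D) y)
    (h3 : ∀ (D : Finset α) (x : α), x ∈ D →
      0 ≤ ∑ E : Finset α, if D ⊆ E then r E x else 0)
    (ρ : Finset α → α → ℝ)
    (hρ : ρ = fun D x => ∑ E : Finset α, if D ⊆ E then r E x else 0) :
    (∀ (D : Finset α) (x : α), x ∈ D → 0 ≤ ρ D x) ∧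
    (∀ D : Finset α, D.Nonempty → ∑ x ∈ D, ρ D x = 1) ∧
    (∀ (D : Finset α) (x : α), x ∈ D → bmK ρ D x = r D x) := by
  subst hρ
  refine ⟨h3, fun D hD => ?_, fun D x _ => ?_⟩
  · have hnet : ∀ E, D ⊆ E → inflow r E - outflow r E = if E = univ then 1 else 0 := by
      intro E hDE
      split_ifs with hE
      · simp [hE, inflow, outflow, h1]
      · rw [inflow, outflow, h2 E (hD.mono hDE) hE, sub_self]
    simp only [← sum_filter]
    rw [sum_sum_superset_eq_sum_superset_inflow_sub_outflow,
      sum_congr rfl fun E hE => hnet E (mem_filter.1 hE).2]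
    simp
  · simpa only [bmK, ← sum_filter] using sum_superset_neg_one_pow_mul_sum_superset (r · x) D

/-- A flow `r` (indexed by arcs `(D∖x, D)`, encoded as pairs `(D, x)` with `x ∈ D`)
satisfying the source condition, flow conservation, and nonnegativity of the
cumulative sums induces a complete dataset `ρ̂(D,x) = ∑_{E ⊇ D} r(E∖x, E)` whose
Block–Marschak polynomials recover `r`. -/
theorem stmt_4 [Nonempty α] (r : Finset α → α → ℝ)
    (h1 : ∑ x : α, r Finset.univ x = 1)
    (h2 : ∀ D : Finset α, D.Nonempty → D ≠ Finset.univ →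
      ∑ x ∈ D, r D x = ∑ y ∈ Dᶜ, r (insert y D) y)
    (h3 : ∀ (D : Finset α) (x : α), x ∈ D →
      0 ≤ ∑ E : Finset α, if D ⊆ E then r E x else 0)
    (ρ : Finset α → α → ℝ)
    (hρ : ρ = fun D x => ∑ E : Finset α, if D ⊆ E then r E x else 0) :
    (∀ (D : Finset α) (x : α), x ∈ D → 0 ≤ ρ D x) ∧
    (∀ D : Finset α, D.Nonempty → ∑ x ∈ D, ρ D x = 1) ∧
    (∀ (D : Finset α) (x : α), x ∈ D → bmK ρ D x = r D x) :=
  stmt_4_general r h1 h2 h3 ρ hρ
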